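/- arXiv:2605.26866 — 2 statements merged into one kernel-verified Lean document; each statement's English description precedes it below -/
import Mathlib

section
/- The decryption operator U_dec is unitary: U_dec * U_decᴴ = 1 and U_decᴴ * U_dec = 1. -/
open Matrix Complex BigOperators
open scoped Kronecker

noncomputable section

/-- `ω = exp(2πi/d)`, the primitive `d`-th root of unity. -/
def ω (d : ℕ) : ℂ := Complex.exp (2 * Real.pi * Complex.I / d)

/-- `τ = exp(πi(d+1)/d)`, so that `τ² = ω`. -/
def τ (d : ℕ) : ℂ := Complex.exp (Real.pi * Complex.I * (d + 1) / d)

/-- The clock matrix `Z`, diagonal with entries `ω^(j.val)`. -/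
def Zmat (d : ℕ) : Matrix (ZMod d) (ZMod d) ℂ :=
  Matrix.diagonal fun j => ω d ^ (j.val)

/-- The shift matrix `X`, with `X j k = 1` iff `j = k + 1` in `ZMod d`. -/
def Xmat (d : ℕ) : Matrix (ZMod d) (ZMod d) ℂ :=
  Matrix.of fun j k => if j = k + 1 then 1 else 0

lemma omega_ne_zero (d : ℕ) : ω d ≠ 0 := Complex.exp_ne_zero _

/-- The clock matrix as an invertible matrix (a unit of the matrix ring). -/
def Zu (d : ℕ) [NeZero d] : (Matrix (ZMod d) (ZMod d) ℂ)ˣ where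
  val := Zmat d
  inv := Matrix.diagonal fun j => (ω d ^ (j.val))⁻¹
  val_inv := by
    rw [Zmat, Matrix.diagonal_mul_diagonal]
    have h : (fun j : ZMod d => ω d ^ j.val * (ω d ^ j.val)⁻¹) = fun _ => 1 := by
      funext j; exact mul_inv_cancel₀ (pow_ne_zero _ (omega_ne_zero d))
    rw [h, Matrix.diagonal_one]
  inv_val := by
    rw [Zmat, Matrix.diagonal_mul_diagonal]
    have h : (fun j : ZMod d => (ω d ^ j.val)⁻¹ * ω d ^ j.val) = fun _ => 1 := by
      funext j; exact inv_mul_cancel₀ (pow_ne_zero _ (omega_ne_zero d))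
    rw [h, Matrix.diagonal_one]

lemma Xmat_mul_transpose (d : ℕ) [NeZero d] : Xmat d * (Xmat d)ᵀ = 1 := by
  ext i j
  simp only [Matrix.mul_apply, Matrix.transpose_apply, Xmat, Matrix.of_apply,
    Matrix.one_apply, ite_mul, one_mul, zero_mul]
  have h : ∀ m : ZMod d,
      (if i = m + 1 then (if j = m + 1 then (1:ℂ) else 0) else 0)
        = (if m = i - 1 then (if j = m + 1 then (1:ℂ) else 0) else 0) := by
    intro m
    by_cases hm : i = m + 1
    · have hm' : m = i - 1 := by rw [hm]; ring
      rw [if_pos hm, if_pos hm']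
    · have hm' : ¬ m = i - 1 := fun h' => hm (by rw [h']; ring)
      rw [if_neg hm, if_neg hm']
  rw [Finset.sum_congr rfl fun m _ => h m, Finset.sum_ite_eq' Finset.univ (i - 1)]
  simp only [Finset.mem_univ, if_true, sub_add_cancel]
  by_cases hij : i = j
  · subst hij; simp
  · rw [if_neg (fun h' => hij h'.symm), if_neg hij]

/-- The shift matrix as an invertible matrix (a unit of the matrix ring). -/
def Xu (d : ℕ) [NeZero d] : (Matrix (ZMod d) (ZMod d) ℂ)ˣ :=
  ⟨Xmat d, (Xmat d)ᵀ, Xmat_mul_transpose d,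
    mul_eq_one_comm.mp (Xmat_mul_transpose d)⟩

/-- The Weyl–Heisenberg displacement operator `W(a,b) = τ^(ab) • X^a * Z^b`,
where `X^a`, `Z^b` are integer (`zpow`) powers of the invertible matrices `X`, `Z`. -/
def Wop (d : ℕ) [NeZero d] (a b : ℤ) : Matrix (ZMod d) (ZMod d) ℂ :=
  τ d ^ (a * b) •
    (((Xu d ^ a : (Matrix (ZMod d) (ZMod d) ℂ)ˣ) : Matrix (ZMod d) (ZMod d) ℂ) *
      ((Zu d ^ b : (Matrix (ZMod d) (ZMod d) ℂ)ˣ) : Matrix (ZMod d) (ZMod d) ℂ))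

/-- The maximally entangled vector `Φ(j,k) = 1/√d` if `j = k`, else `0`. -/
def MES (d : ℕ) : ZMod d × ZMod d → ℂ :=
  fun p => if p.1 = p.2 then ((1 / Real.sqrt d : ℝ) : ℂ) else 0

/-- The generalized Bell vector `B(a,b)(s,t) = ω^(−b·t.val)/√d` if `s = t − a`, else `0`. -/
def Bell (d : ℕ) (a b : ℤ) : ZMod d × ZMod d → ℂ :=
  fun p => if p.1 = p.2 - (a : ZMod d)
    then ω d ^ (-(b * (p.2.val : ℤ))) / ((Real.sqrt d : ℝ) : ℂ) else 0

/-- The phase `φ(a,b) = τ^(−(a² + b² − (n+1)·a·b))`. -/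
def φcoef (d n : ℕ) (a b : ℤ) : ℂ :=
  τ d ^ (-(a ^ 2 + b ^ 2 - ((n : ℤ) + 1) * a * b))

/-- The encryption operator `U_enc`. -/
def Uenc (d n : ℕ) [NeZero d] :
    Matrix (ZMod d × (Fin n → ZMod d)) (ZMod d × (Fin n → ZMod d)) ℂ :=
  Matrix.of fun p q => (1 / (d : ℂ)) *
    ∑ a ∈ Finset.range d, ∑ b ∈ Finset.range d,
      (φcoef d n a b)⁻¹ * Wop d a b p.1 q.1 *
        ∏ i, (Wop d a b)ᴴ (p.2 i) (q.2 i)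

/-- The decryption operator `U_dec` for decrypting the `l`-th signal qudit. -/
def Udec (d n : ℕ) [NeZero d] (l : Fin n) :
    Matrix (ZMod d × (Fin n → ZMod d)) (ZMod d × (Fin n → ZMod d)) ℂ :=
  Matrix.of fun p q =>
    ∑ a ∈ Finset.range d, ∑ b ∈ Finset.range d,
      φcoef d n a b * Bell d a b (p.1, p.2 l) *
        (starRingEnd ℂ) (Bell d a b (q.1, q.2 l)) *
        ∏ i ∈ Finset.univ.erase l, (Wop d a b)ᵀ (p.2 i) (q.2 i)

/-- The initial global state `Ψ₀(k,s,t) = ψ(k)·d^(−n/2)` if `s = t`, else `0`. -/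
def Ψinit (d n : ℕ) (ψ : ZMod d → ℂ) :
    ZMod d × (Fin n → ZMod d) × (Fin n → ZMod d) → ℂ :=
  fun p => if p.2.1 = p.2.2 then ψ p.1 * (((d : ℝ) ^ (-(n : ℝ) / 2) : ℝ) : ℂ) else 0

/-- The encrypted global state `Ψ_enc = U_enc Ψ₀` (U_enc acting on A and the signals). -/
def Ψenc (d n : ℕ) [NeZero d] (ψ : ZMod d → ℂ) :
    ZMod d × (Fin n → ZMod d) × (Fin n → ZMod d) → ℂ :=
  fun p => ∑ k' : ZMod d, ∑ s' : Fin n → ZMod d,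
    Uenc d n (p.1, p.2.1) (k', s') * Ψinit d n ψ (k', s', p.2.2)

/-- Assemble a function `Fin n → α` from a value `u` at index `i₀` and values `g`
on the remaining indices. -/
def insVal {α : Type*} {n : ℕ} (i₀ : Fin n) (u : α) (g : {i : Fin n // i ≠ i₀} → α) :
    Fin n → α :=
  fun i => if h : i = i₀ then u else g ⟨i, h⟩


set_option linter.unusedSectionVars false

section AuxLemmas

variable (d : ℕ) [NeZero d]

lemma tau_ne_zero : τ d ≠ 0 := Complex.exp_ne_zero _

lemma conj_omega : (starRingEnd ℂ) (ω d) = (ω d)⁻¹ := by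
  rw [ω, ← Complex.exp_conj, ← Complex.exp_neg]
  congr 1
  rw [map_div₀, _root_.map_mul, _root_.map_mul, Complex.conj_I, Complex.conj_ofReal,
    map_ofNat, map_natCast]
  ring

lemma conj_tau : (starRingEnd ℂ) (τ d) = (τ d)⁻¹ := by
  rw [τ, ← Complex.exp_conj, ← Complex.exp_neg]
  congr 1
  rw [map_div₀, _root_.map_mul, _root_.map_mul, map_add, Complex.conj_I, Complex.conj_ofReal,
    _root_.map_one, map_natCast]
  ring

lemma conj_omega_zpow (k : ℤ) : (starRingEnd ℂ) (ω d ^ k) = ω d ^ (-k) := by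
  rw [map_zpow₀, conj_omega, _root_.inv_zpow, ← _root_.zpow_neg]

lemma conj_tau_zpow (k : ℤ) : (starRingEnd ℂ) (τ d ^ k) = τ d ^ (-k) := by
  rw [map_zpow₀, conj_tau, _root_.inv_zpow, ← _root_.zpow_neg]

lemma tau_zpow_mul_neg (k : ℤ) : τ d ^ k * τ d ^ (-k) = 1 := by
  rw [← zpow_add₀ (tau_ne_zero d), add_neg_cancel, zpow_zero]

lemma omega_prim : IsPrimitiveRoot (ω d) d :=
  Complex.isPrimitiveRoot_exp d (NeZero.ne d)

lemma omega_zpow_d (k : ℤ) : (ω d ^ k) ^ d = 1 := by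
  rw [← zpow_natCast (ω d ^ k), ← _root_.zpow_mul, mul_comm, _root_.zpow_mul, zpow_natCast,
    (omega_prim d).pow_eq_one, _root_.one_zpow]

lemma sum_omega_zpow_mul (k : ℤ) (hk : ¬ (d:ℤ) ∣ k) :
    ∑ j ∈ Finset.range d, ω d ^ (k * (j:ℤ)) = 0 := by
  have hx : ω d ^ k ≠ 1 := by
    rw [Ne, (omega_prim d).zpow_eq_one_iff_dvd]; exact hk
  have h2 : ∀ j ∈ Finset.range d, ω d ^ (k * (j:ℤ)) = (ω d ^ k) ^ j := by
    intro j _; rw [_root_.zpow_mul, zpow_natCast]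
  rw [Finset.sum_congr rfl h2, geom_sum_eq hx, omega_zpow_d, sub_self, zero_div]

/-- Sum over `ZMod d` of a function of `val` equals sum over `range d`. -/
lemma sum_zmod_val (f : ℕ → ℂ) :
    ∑ u : ZMod d, f u.val = ∑ j ∈ Finset.range d, f j := by
  refine Finset.sum_nbij' (fun u => u.val) (fun j => (j : ZMod d)) ?_ ?_ ?_ ?_ ?_
  · intro u _; exact Finset.mem_range.mpr (ZMod.val_lt u)
  · intro j _; exact Finset.mem_univ _
  · intro u _; exact ZMod.natCast_rightInverse u
  · intro j hj; exact ZMod.val_cast_of_lt (Finset.mem_range.mp hj)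
  · intro u _; rfl

lemma sum_omega_val (k : ℤ) (hk : k.natAbs < d) :
    ∑ u : ZMod d, ω d ^ (k * (u.val : ℤ)) = if k = 0 then (d:ℂ) else 0 := by
  rw [sum_zmod_val d (fun j => ω d ^ (k * (j:ℤ)))]
  by_cases h : k = 0
  · simp [h]
  · rw [if_neg h, sum_omega_zpow_mul]
    intro hdvd
    exact h (Int.eq_zero_of_abs_lt_dvd hdvd (by rw [Int.abs_eq_natAbs]; exact_mod_cast hk))

end AuxLemmas
section Wunit
variable (d : ℕ) [NeZero d]

lemma star_Xu : star (Xu d) = (Xu d)⁻¹ := by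
  apply Units.ext
  rw [Units.coe_star]
  show star (Xmat d) = ((Xu d)⁻¹ : (Matrix (ZMod d) (ZMod d) ℂ)ˣ).val
  have h1 : ((Xu d)⁻¹ : (Matrix (ZMod d) (ZMod d) ℂ)ˣ).val = (Xmat d)ᵀ := rfl
  rw [h1, Matrix.star_eq_conjTranspose]
  ext i j
  simp only [Matrix.conjTranspose_apply, Matrix.transpose_apply, Xmat, Matrix.of_apply]
  split <;> simp

lemma star_Zu : star (Zu d) = (Zu d)⁻¹ := by
  apply Units.ext
  rw [Units.coe_star]
  show star (Zmat d) = ((Zu d)⁻¹ : (Matrix (ZMod d) (ZMod d) ℂ)ˣ).val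
  have h1 : ((Zu d)⁻¹ : (Matrix (ZMod d) (ZMod d) ℂ)ˣ).val
      = Matrix.diagonal fun j : ZMod d => (ω d ^ (j.val))⁻¹ := rfl
  rw [h1, Matrix.star_eq_conjTranspose, Zmat, Matrix.diagonal_conjTranspose]
  have h0 : star (ω d) = (ω d)⁻¹ := by
    rw [← starRingEnd_apply, conj_omega]
  have h2 : (star fun j : ZMod d => ω d ^ j.val) = fun j : ZMod d => (ω d ^ j.val)⁻¹ := by
    funext j
    simp only [Pi.star_apply, star_pow, h0, inv_pow]
  rw [h2]

lemma star_XZ_zpow (a b : ℤ) :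
    star (Xu d ^ a * Zu d ^ b) = (Xu d ^ a * Zu d ^ b)⁻¹ := by
  rw [StarMul.star_mul, star_zpow, star_zpow, star_Xu, star_Zu, _root_.inv_zpow, _root_.inv_zpow,
    _root_.mul_inv_rev]

lemma Wop_conjTranspose (a b : ℤ) :
    (Wop d a b)ᴴ = τ d ^ (-(a*b)) •
      (((Xu d ^ a * Zu d ^ b)⁻¹ : (Matrix (ZMod d) (ZMod d) ℂ)ˣ) :
        Matrix (ZMod d) (ZMod d) ℂ) := by
  rw [Wop, ← Units.val_mul, Matrix.conjTranspose_smul, ← conj_tau_zpow,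
    ← Matrix.star_eq_conjTranspose, ← Units.coe_star, star_XZ_zpow]
  rfl

lemma Wop_mul_conjTranspose (a b : ℤ) : Wop d a b * (Wop d a b)ᴴ = 1 := by
  rw [Wop_conjTranspose, Wop, ← Units.val_mul, Matrix.smul_mul, Matrix.mul_smul,
    smul_smul, tau_zpow_mul_neg, ← Units.val_mul, mul_inv_cancel, Units.val_one, one_smul]

lemma conjTranspose_mul_Wop (a b : ℤ) : (Wop d a b)ᴴ * Wop d a b = 1 :=
  mul_eq_one_comm.mp (Wop_mul_conjTranspose d a b)

lemma Wt_mul_conjTranspose (a b : ℤ) : (Wop d a b)ᵀ * ((Wop d a b)ᵀ)ᴴ = 1 := by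
  have h : ((Wop d a b)ᵀ)ᴴ = ((Wop d a b)ᴴ)ᵀ := by
    ext i j; simp [Matrix.conjTranspose_apply, Matrix.transpose_apply]
  rw [h, ← Matrix.transpose_mul, conjTranspose_mul_Wop, Matrix.transpose_one]

lemma Wt_row_orth (a b : ℤ) (x y : ZMod d) :
    ∑ v : ZMod d, (Wop d a b)ᵀ x v * (starRingEnd ℂ) ((Wop d a b)ᵀ y v)
      = if x = y then 1 else 0 := by
  have h := congrFun (congrFun (Wt_mul_conjTranspose d a b) x) y
  rw [Matrix.mul_apply] at h
  simp only [Matrix.conjTranspose_apply] at h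
  rw [show ((1 : Matrix (ZMod d) (ZMod d) ℂ) x y) = if x = y then 1 else 0 from
    Matrix.one_apply] at h
  simpa using h

end Wunit
section BellLemmas
variable (d : ℕ) [NeZero d]

lemma sqrtd_mul_self : ((Real.sqrt d : ℝ) : ℂ) * ((Real.sqrt d : ℝ) : ℂ) = (d : ℂ) := by
  rw [← Complex.ofReal_mul, Real.mul_self_sqrt (Nat.cast_nonneg d)]
  simp

lemma dC_ne_zero : (d : ℂ) ≠ 0 := Nat.cast_ne_zero.mpr (NeZero.ne d)

lemma conj_bell (a b : ℕ) (s u : ZMod d) :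
    (starRingEnd ℂ) (Bell d a b (s, u)) =
      if s = u - (a : ZMod d) then
        ω d ^ ((b : ℤ) * (u.val : ℤ)) / ((Real.sqrt d : ℝ) : ℂ) else 0 := by
  rw [Bell]
  simp only [Int.cast_natCast]
  rw [apply_ite (starRingEnd ℂ), map_zero, map_div₀, conj_omega_zpow, neg_neg,
    Complex.conj_ofReal]

lemma bell_apply (a b : ℕ) (s u : ZMod d) :
    Bell d a b (s, u) =
      if s = u - (a : ZMod d) then
        ω d ^ (-((b : ℤ) * (u.val : ℤ))) / ((Real.sqrt d : ℝ) : ℂ) else 0 := by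
  rw [Bell]
  simp only [Int.cast_natCast]

lemma bell_orth (a b a' b' : ℕ) (ha : a < d) (ha' : a' < d) (hb : b < d) (hb' : b' < d) :
    ∑ s : ZMod d, ∑ u : ZMod d,
      (starRingEnd ℂ) (Bell d a b (s, u)) * Bell d a' b' (s, u)
      = if a = a' ∧ b = b' then 1 else 0 := by
  rw [Finset.sum_comm]
  have key : ∀ u : ZMod d,
      (∑ s : ZMod d, (starRingEnd ℂ) (Bell d a b (s, u)) * Bell d a' b' (s, u))
      = if (a : ZMod d) = (a' : ZMod d)
        then ω d ^ (((b : ℤ) - (b' : ℤ)) * (u.val : ℤ)) / (d : ℂ) else 0 := by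
    intro u
    simp only [conj_bell]
    simp only [bell_apply]
    simp only [ite_mul, zero_mul, mul_ite, mul_zero]
    rw [Finset.sum_ite_eq' Finset.univ (u - (a' : ZMod d))]
    simp only [Finset.mem_univ, if_true, sub_right_inj]
    by_cases hc : (a : ZMod d) = (a' : ZMod d)
    · rw [if_pos hc.symm, if_pos hc, div_mul_div_comm, ← zpow_add₀ (omega_ne_zero d),
        sqrtd_mul_self]
      congr 2
      ring
    · rw [if_neg (fun h => hc h.symm), if_neg hc]
  rw [Finset.sum_congr rfl (fun u _ => key u)]
  by_cases hc : (a : ZMod d) = (a' : ZMod d)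
  · have haa : a = a' := by
      have := congrArg ZMod.val hc
      rwa [ZMod.val_cast_of_lt ha, ZMod.val_cast_of_lt ha'] at this
    subst haa
    have h1 : ∀ u : ZMod d,
        (if (a : ZMod d) = (a : ZMod d)
          then ω d ^ (((b : ℤ) - (b' : ℤ)) * (u.val : ℤ)) / (d : ℂ) else 0)
        = ω d ^ (((b : ℤ) - (b' : ℤ)) * (u.val : ℤ)) / (d : ℂ) := fun u => if_pos rfl
    rw [Finset.sum_congr rfl (fun u _ => h1 u), ← Finset.sum_div,
      sum_omega_val d _ (by omega)]
    by_cases hbb : b = b'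
    · subst hbb
      rw [if_pos (by omega), div_self (dC_ne_zero d), if_pos ⟨rfl, rfl⟩]
    · rw [if_neg (by omega), zero_div, if_neg (by tauto)]
  · simp only [if_neg hc, Finset.sum_const, smul_zero, map_zero, mul_zero, Finset.sum_const_zero]
    rw [if_neg]
    rintro ⟨rfl, rfl⟩
    exact hc rfl

lemma bell_complete (s t s' t' : ZMod d) :
    ∑ a ∈ Finset.range d, ∑ b ∈ Finset.range d,
      Bell d a b (s, t) * (starRingEnd ℂ) (Bell d a b (s', t'))
      = if s = s' ∧ t = t' then 1 else 0 := by
  have hb : ∀ a ∈ Finset.range d,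
      (∑ b ∈ Finset.range d,
        Bell d a b (s, t) * (starRingEnd ℂ) (Bell d a b (s', t')))
      = if (s = t - (a : ZMod d) ∧ s' = t' - (a : ZMod d)) ∧ t = t' then 1 else 0 := by
    intro a _
    simp only [conj_bell]
    simp only [bell_apply]
    simp only [ite_mul, zero_mul, mul_ite, mul_zero]
    by_cases h1 : s = t - (a : ZMod d)
    · by_cases h2 : s' = t' - (a : ZMod d)
      · simp only [if_pos h1, if_pos h2]
        have hterm : ∀ b : ℕ,
            ω d ^ (-((b : ℤ) * (t.val : ℤ))) / ((Real.sqrt d : ℝ) : ℂ) *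
              (ω d ^ ((b : ℤ) * (t'.val : ℤ)) / ((Real.sqrt d : ℝ) : ℂ))
            = ω d ^ (((t'.val : ℤ) - (t.val : ℤ)) * (b : ℤ)) / (d : ℂ) := by
          intro b
          rw [div_mul_div_comm, ← zpow_add₀ (omega_ne_zero d), sqrtd_mul_self]
          congr 2
          ring
        rw [Finset.sum_congr rfl (fun b _ => hterm b), ← Finset.sum_div]
        by_cases htt : t = t'
        · subst htt
          simp only [sub_self, zero_mul, zpow_zero, Finset.sum_const, Finset.card_range,
            nsmul_eq_mul, mul_one]
          rw [div_self (dC_ne_zero d)]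
          simp [h1, h2]
        · have hne : (t'.val : ℤ) - (t.val : ℤ) ≠ 0 := by
            intro h
            exact htt (ZMod.val_injective d (by omega)).symm
          have hnd : ¬ ((d:ℤ) ∣ ((t'.val : ℤ) - (t.val : ℤ))) := by
            intro hdvd
            apply hne
            refine Int.eq_zero_of_abs_lt_dvd hdvd ?_
            have h3 := ZMod.val_lt t
            have h4 := ZMod.val_lt t'
            rw [abs_sub_lt_iff]
            omega
          rw [sum_omega_zpow_mul d _ hnd, zero_div, if_neg (by tauto)]
      · simp [h2]
    · simp [h1]
  rw [Finset.sum_congr rfl hb]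
  have hzv := sum_zmod_val d (fun j =>
    if (s = t - (j : ZMod d) ∧ s' = t' - (j : ZMod d)) ∧ t = t' then (1:ℂ) else 0)
  rw [← hzv]
  have hcond : ∀ u : ZMod d,
      (if (s = t - ((u.val : ℕ) : ZMod d) ∧ s' = t' - ((u.val : ℕ) : ZMod d)) ∧ t = t'
        then (1:ℂ) else 0)
      = if u = t - s then (if s' = t' - u ∧ t = t' then (1:ℂ) else 0) else 0 := by
    intro u
    rw [ZMod.natCast_rightInverse u]
    by_cases h1 : s = t - u
    · have h1' : u = t - s := by rw [h1]; ring
      rw [if_pos h1']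
      by_cases h2 : s' = t' - u ∧ t = t'
      · rw [if_pos ⟨⟨h1, h2.1⟩, h2.2⟩, if_pos h2]
      · rw [if_neg (by tauto), if_neg h2]
    · have h1' : ¬ u = t - s := fun h => h1 (by rw [h]; ring)
      rw [if_neg h1', if_neg (by tauto)]
  rw [Finset.sum_congr rfl (fun u _ => hcond u), Finset.sum_ite_eq' Finset.univ (t - s)]
  simp only [Finset.mem_univ, if_true]
  by_cases htt : t = t'
  · subst htt
    have hiff : (s' = t - (t - s)) ↔ s = s' := by
      constructor
      · intro h; rw [h]; ring
      · intro h; rw [← h]; ring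
    by_cases hss : s = s'
    · rw [if_pos ⟨hiff.mpr hss, rfl⟩, if_pos ⟨hss, rfl⟩]
    · rw [if_neg (fun h => hss (hiff.mp h.1)), if_neg (by tauto)]
  · rw [if_neg (by tauto), if_neg (by tauto)]

end BellLemmas
section MainLemmas
variable (d n : ℕ) [NeZero d] (l : Fin n)

lemma sum_fun_split (f : ZMod d → ℂ) (G : Fin n → ZMod d → ℂ) :
    ∑ m : Fin n → ZMod d, f (m l) * ∏ i ∈ Finset.univ.erase l, G i (m i)
    = (∑ u : ZMod d, f u) * ∏ i ∈ Finset.univ.erase l, ∑ u : ZMod d, G i u := by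
  classical
  set H : Fin n → ZMod d → ℂ := fun i => if i = l then f else G i with hH
  have h1 : ∀ m : Fin n → ZMod d,
      f (m l) * ∏ i ∈ Finset.univ.erase l, G i (m i) = ∏ i, H i (m i) := by
    intro m
    rw [← Finset.mul_prod_erase Finset.univ (fun i => H i (m i)) (Finset.mem_univ l)]
    congr 1
    · simp [hH]
    · exact Finset.prod_congr rfl fun i hi => by
        simp [hH, (Finset.mem_erase.mp hi).1]
  rw [Finset.sum_congr rfl fun m _ => h1 m, ← Fintype.prod_sum,
    ← Finset.mul_prod_erase Finset.univ (fun i => ∑ u, H i u) (Finset.mem_univ l)]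
  congr 1
  · simp [hH]
  · exact Finset.prod_congr rfl fun i hi => by simp [hH, (Finset.mem_erase.mp hi).1]

lemma sum_pair_split (f : ZMod d × ZMod d → ℂ) (G : Fin n → ZMod d → ℂ) :
    ∑ r : ZMod d × (Fin n → ZMod d),
      f (r.1, r.2 l) * ∏ i ∈ Finset.univ.erase l, G i (r.2 i)
    = (∑ s : ZMod d, ∑ u : ZMod d, f (s, u)) *
        ∏ i ∈ Finset.univ.erase l, ∑ u : ZMod d, G i u := by
  rw [Fintype.sum_prod_type, Finset.sum_congr rfl
    (fun s _ => sum_fun_split d n l (fun u => f (s, u)) G), ← Finset.sum_mul]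

lemma phi_mul_conj (a b : ℕ) :
    φcoef d n a b * (starRingEnd ℂ) (φcoef d n a b) = 1 := by
  rw [φcoef, conj_tau_zpow]
  exact tau_zpow_mul_neg d _

lemma key_inner (a b a' b' : ℕ) (ha : a < d) (ha' : a' < d) (hb : b < d) (hb' : b' < d)
    (p1 q1 : ZMod d) (p2 q2 : Fin n → ZMod d) :
    ∑ r : ZMod d × (Fin n → ZMod d),
      (φcoef d n a b * Bell d a b (p1, p2 l) * (starRingEnd ℂ) (Bell d a b (r.1, r.2 l)) *
        ∏ i ∈ Finset.univ.erase l, (Wop d a b)ᵀ (p2 i) (r.2 i)) *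
      (starRingEnd ℂ) (φcoef d n a' b' * Bell d a' b' (q1, q2 l) *
        (starRingEnd ℂ) (Bell d a' b' (r.1, r.2 l)) *
        ∏ i ∈ Finset.univ.erase l, (Wop d a' b')ᵀ (q2 i) (r.2 i))
    = if a = a' ∧ b = b' then
        Bell d a b (p1, p2 l) * (starRingEnd ℂ) (Bell d a b (q1, q2 l)) *
          ∏ i ∈ Finset.univ.erase l, (if p2 i = q2 i then (1:ℂ) else 0)
      else 0 := by
  have hterm : ∀ r : ZMod d × (Fin n → ZMod d),
      (φcoef d n a b * Bell d a b (p1, p2 l) * (starRingEnd ℂ) (Bell d a b (r.1, r.2 l)) *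
        ∏ i ∈ Finset.univ.erase l, (Wop d a b)ᵀ (p2 i) (r.2 i)) *
      (starRingEnd ℂ) (φcoef d n a' b' * Bell d a' b' (q1, q2 l) *
        (starRingEnd ℂ) (Bell d a' b' (r.1, r.2 l)) *
        ∏ i ∈ Finset.univ.erase l, (Wop d a' b')ᵀ (q2 i) (r.2 i))
      = (φcoef d n a b * (starRingEnd ℂ) (φcoef d n a' b') *
          (Bell d a b (p1, p2 l) * (starRingEnd ℂ) (Bell d a' b' (q1, q2 l)))) *
        (((starRingEnd ℂ) (Bell d a b (r.1, r.2 l)) * Bell d a' b' (r.1, r.2 l)) *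
          ∏ i ∈ Finset.univ.erase l,
            ((Wop d a b)ᵀ (p2 i) (r.2 i) *
              (starRingEnd ℂ) ((Wop d a' b')ᵀ (q2 i) (r.2 i)))) := by
    intro r
    rw [_root_.map_mul, _root_.map_mul, _root_.map_mul, Complex.conj_conj, map_prod, Finset.prod_mul_distrib]
    ring
  rw [Finset.sum_congr rfl fun r _ => hterm r, ← Finset.mul_sum,
    sum_pair_split d n l
      (fun pr => (starRingEnd ℂ) (Bell d a b pr) * Bell d a' b' pr)
      (fun i v => (Wop d a b)ᵀ (p2 i) v * (starRingEnd ℂ) ((Wop d a' b')ᵀ (q2 i) v)),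
    bell_orth d a b a' b' ha ha' hb hb']
  by_cases hab : a = a' ∧ b = b'
  · obtain ⟨rfl, rfl⟩ := hab
    rw [if_pos ⟨rfl, rfl⟩, if_pos ⟨rfl, rfl⟩, one_mul,
      Finset.prod_congr rfl (fun i (_ : i ∈ Finset.univ.erase l) =>
        Wt_row_orth d a b (p2 i) (q2 i)),
      phi_mul_conj, one_mul]
  · rw [if_neg hab, if_neg hab, zero_mul, mul_zero]

end MainLemmas
/-- Summand of the decryption operator. -/
def Tdec (d n : ℕ) [NeZero d] (l : Fin n) (a b : ℕ)
    (x r : ZMod d × (Fin n → ZMod d)) : ℂ :=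
  φcoef d n a b * Bell d a b (x.1, x.2 l) * (starRingEnd ℂ) (Bell d a b (r.1, r.2 l)) *
    ∏ i ∈ Finset.univ.erase l, (Wop d a b)ᵀ (x.2 i) (r.2 i)

lemma Udec_apply (d n : ℕ) [NeZero d] (l : Fin n) (x r : ZMod d × (Fin n → ZMod d)) :
    Udec d n l x r = ∑ a ∈ Finset.range d, ∑ b ∈ Finset.range d, Tdec d n l a b x r := rfl

lemma key_inner_T (d n : ℕ) [NeZero d] (l : Fin n) (a b a' b' : ℕ)
    (ha : a < d) (ha' : a' < d) (hb : b < d) (hb' : b' < d)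
    (p q : ZMod d × (Fin n → ZMod d)) :
    ∑ r : ZMod d × (Fin n → ZMod d),
      Tdec d n l a b p r * (starRingEnd ℂ) (Tdec d n l a' b' q r)
    = if a = a' ∧ b = b' then
        Bell d a b (p.1, p.2 l) * (starRingEnd ℂ) (Bell d a b (q.1, q.2 l)) *
          ∏ i ∈ Finset.univ.erase l, (if p.2 i = q.2 i then (1:ℂ) else 0)
      else 0 :=
  key_inner d n l a b a' b' ha ha' hb hb' p.1 q.1 p.2 q.2

lemma collapse_ite {s t : Finset ℕ} {a b : ℕ} (ha : a ∈ s) (hb : b ∈ t) (V : ℂ) :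
    ∑ a' ∈ s, ∑ b' ∈ t, (if a = a' ∧ b = b' then V else 0) = V := by
  have h1 : ∀ a' ∈ s,
      (∑ b' ∈ t, if a = a' ∧ b = b' then V else 0) = if a = a' then V else 0 := by
    intro a' _
    by_cases h : a = a'
    · subst h
      simp only [true_and]
      rw [Finset.sum_ite_eq t b fun _ => V]
      simp [hb]
    · simp [h]
  rw [Finset.sum_congr rfl h1, Finset.sum_ite_eq s a fun _ => V, if_pos ha]

/-- the decryption operator `U_dec` is unitary. -/
theorem Udec_unitary (d n : ℕ) [NeZero d] (hd : 2 ≤ d) (hn : 2 ≤ n) (l : Fin n) :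
    Udec d n l * (Udec d n l)ᴴ = 1 ∧ (Udec d n l)ᴴ * Udec d n l = 1 := by
  have main : Udec d n l * (Udec d n l)ᴴ = 1 := by
    ext p q
    rw [Matrix.mul_apply]
    have hentry : ∀ r : ZMod d × (Fin n → ZMod d),
        Udec d n l p r * (Udec d n l)ᴴ r q
        = ∑ a ∈ Finset.range d, ∑ b ∈ Finset.range d,
            ∑ a' ∈ Finset.range d, ∑ b' ∈ Finset.range d,
            Tdec d n l a b p r * (starRingEnd ℂ) (Tdec d n l a' b' q r) := by
      intro r
      rw [Matrix.conjTranspose_apply, ← starRingEnd_apply, Udec_apply, Udec_apply]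
      simp only [map_sum]
      rw [Finset.sum_mul_sum]
      refine Finset.sum_congr rfl fun a _ => ?_
      rw [Finset.sum_congr rfl fun a' (_ : a' ∈ Finset.range d) =>
        Finset.sum_mul_sum (Finset.range d) (Finset.range d) _ _, Finset.sum_comm]
    rw [Finset.sum_congr rfl fun r _ => hentry r, Finset.sum_comm]
    have hstep : ∀ a ∈ Finset.range d,
        (∑ r : ZMod d × (Fin n → ZMod d), ∑ b ∈ Finset.range d,
          ∑ a' ∈ Finset.range d, ∑ b' ∈ Finset.range d,
            Tdec d n l a b p r * (starRingEnd ℂ) (Tdec d n l a' b' q r))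
        = ∑ b ∈ Finset.range d,
            Bell d a b (p.1, p.2 l) * (starRingEnd ℂ) (Bell d a b (q.1, q.2 l)) *
              ∏ i ∈ Finset.univ.erase l, (if p.2 i = q.2 i then (1:ℂ) else 0) := by
      intro a ha
      rw [Finset.sum_comm]
      refine Finset.sum_congr rfl fun b hb => ?_
      rw [Finset.sum_comm]
      have h3 : ∀ a' ∈ Finset.range d,
          (∑ r : ZMod d × (Fin n → ZMod d), ∑ b' ∈ Finset.range d,
            Tdec d n l a b p r * (starRingEnd ℂ) (Tdec d n l a' b' q r))
          = ∑ b' ∈ Finset.range d,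
              if a = a' ∧ b = b' then
                Bell d a b (p.1, p.2 l) * (starRingEnd ℂ) (Bell d a b (q.1, q.2 l)) *
                  ∏ i ∈ Finset.univ.erase l, (if p.2 i = q.2 i then (1:ℂ) else 0)
              else 0 := by
        intro a' ha'
        rw [Finset.sum_comm]
        refine Finset.sum_congr rfl fun b' hb' => ?_
        exact key_inner_T d n l a b a' b' (Finset.mem_range.mp ha)
          (Finset.mem_range.mp ha') (Finset.mem_range.mp hb) (Finset.mem_range.mp hb') p q
      rw [Finset.sum_congr rfl h3, collapse_ite ha hb]
    rw [Finset.sum_congr rfl hstep]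
    have hpull : ∀ a ∈ Finset.range d,
        (∑ b ∈ Finset.range d,
          Bell d a b (p.1, p.2 l) * (starRingEnd ℂ) (Bell d a b (q.1, q.2 l)) *
            ∏ i ∈ Finset.univ.erase l, (if p.2 i = q.2 i then (1:ℂ) else 0))
        = (∑ b ∈ Finset.range d,
            Bell d a b (p.1, p.2 l) * (starRingEnd ℂ) (Bell d a b (q.1, q.2 l))) *
            ∏ i ∈ Finset.univ.erase l, (if p.2 i = q.2 i then (1:ℂ) else 0) :=
      fun a _ => (Finset.sum_mul _ _ _).symm
    rw [Finset.sum_congr rfl hpull, ← Finset.sum_mul,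
      bell_complete d p.1 (p.2 l) q.1 (q.2 l), Finset.prod_boole, Matrix.one_apply]
    by_cases hpq : p = q
    · subst hpq
      rw [if_pos rfl, if_pos ⟨rfl, rfl⟩, if_pos fun i _ => rfl, one_mul]
    · rw [if_neg hpq]
      by_cases h1 : p.1 = q.1 ∧ p.2 l = q.2 l
      · rw [if_pos h1, one_mul, if_neg]
        intro hall
        apply hpq
        refine Prod.ext h1.1 (funext fun i => ?_)
        by_cases hi : i = l
        · subst hi; exact h1.2
        · exact hall i (Finset.mem_erase.mpr ⟨hi, Finset.mem_univ i⟩)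
      · rw [if_neg h1, zero_mul]
  exact ⟨main, mul_eq_one_comm.mp main⟩
end
end

section
/- Theorem 2 (negative part): for every n ≥ 3 and uniform input ψ(k) = 1/√d for all k, the encrypted (2n+1)-qudit state Ψ_enc is not an AME(2n+1,d) state; specifically, the reduced density matrix on the three registers (A, S₁, N₁), with entries ρ (u,v,w) (u',v',w') = Σ over assignments of the remaining 2n−2 registers of Ψ_enc · conj(Ψ_enc), is not equal to (1/d³) times the d³×d³ identity matrix. -/
open Matrix Complex BigOperators
open scoped Kronecker

noncomputable section

/-- The uniform input state `ψ(k) = 1/√d`. -/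
def ψunif (d : ℕ) : ZMod d → ℂ := fun _ => ((1 / Real.sqrt d : ℝ) : ℂ)

section AuxAME

variable (d : ℕ) [NeZero d]

lemma omega_pow_d : ω d ^ d = 1 := by
  rw [ω, ← Complex.exp_nat_mul]
  have hd : (d:ℂ) ≠ 0 := Nat.cast_ne_zero.mpr (NeZero.ne d)
  have : (d:ℂ) * (2 * Real.pi * Complex.I / d) = 2 * Real.pi * Complex.I := by
    field_simp
  rw [this, Complex.exp_two_pi_mul_I]

lemma omega_pow_pow_d (b : ℕ) : (ω d ^ b) ^ d = 1 := by
  rw [← pow_mul, mul_comm, pow_mul, omega_pow_d, one_pow]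

lemma star_omega : star (ω d) = (ω d)⁻¹ := by
  have h1 : star (ω d) = Complex.exp (starRingEnd ℂ (2 * Real.pi * Complex.I / d)) := by
    rw [Complex.exp_conj]; rfl
  rw [h1]
  have h2 : (starRingEnd ℂ) (2 * Real.pi * Complex.I / d)
      = -(2 * Real.pi * Complex.I / d) := by
    simp [map_div₀, Complex.conj_I, map_ofNat]
    ring
  rw [h2, Complex.exp_neg, ω]

lemma omega_pow_mul_star (b : ℕ) : ω d ^ b * star (ω d ^ b) = 1 := by
  rw [star_pow, star_omega, inv_pow, mul_inv_cancel₀ (pow_ne_zero _ (omega_ne_zero d))]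

lemma pow_mod_cycle (c : ℂ) (hc : c ^ d = 1) (x : ℕ) : c ^ (x % d) = c ^ x := by
  conv_rhs => rw [← Nat.mod_add_div x d]
  rw [pow_add, pow_mul, hc, one_pow, mul_one]

lemma pow_val_succ (hd : 2 ≤ d) (c : ℂ) (hc : c ^ d = 1) (m : ZMod d) :
    c ^ (m + 1).val = c ^ m.val * c := by
  haveI : Fact (1 < d) := ⟨hd⟩
  rw [ZMod.val_add, ZMod.val_one, pow_mod_cycle d c hc, pow_succ]

lemma Xpow_apply (a : ℕ) (j m : ZMod d) :
    (Xmat d ^ a) j m = if j = m + (a : ZMod d) then 1 else 0 := by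
  induction a generalizing j m with
  | zero => simp [Matrix.one_apply]
  | succ a ih =>
    rw [pow_succ, Matrix.mul_apply]
    have h1 : ∀ l : ZMod d, (Xmat d ^ a) j l * Xmat d l m
        = if l = m + 1 then (if j = m + 1 + (a:ZMod d) then (1:ℂ) else 0) else 0 := by
      intro l
      rw [ih]
      by_cases h : l = m + 1 <;> simp [Xmat, h]
    rw [Finset.sum_congr rfl fun l _ => h1 l, Finset.sum_ite_eq' Finset.univ]
    have h2 : m + 1 + (a : ZMod d) = m + ((a+1 : ℕ) : ZMod d) := by push_cast; ring
    simp [h2]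

lemma Wop_apply' (a b : ℕ) (j m : ZMod d) :
    Wop d a b j m = if j = m + (a : ZMod d)
      then τ d ^ (a*b) * (ω d ^ b) ^ m.val else 0 := by
  rw [Wop]
  have hx : ((Xu d ^ ((a:ℕ):ℤ) : (Matrix (ZMod d) (ZMod d) ℂ)ˣ)
      : Matrix (ZMod d) (ZMod d) ℂ) = Xmat d ^ a := by
    rw [zpow_natCast, Units.val_pow_eq_pow_val]; rfl
  have hz : ((Zu d ^ ((b:ℕ):ℤ) : (Matrix (ZMod d) (ZMod d) ℂ)ˣ)
      : Matrix (ZMod d) (ZMod d) ℂ)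
      = Matrix.diagonal (fun j : ZMod d => (ω d ^ j.val) ^ b) := by
    rw [zpow_natCast, Units.val_pow_eq_pow_val]
    show (Zmat d) ^ b = _
    rw [Zmat, Matrix.diagonal_pow]
    rfl
  rw [hx, hz, Matrix.smul_apply, Matrix.mul_diagonal, Xpow_apply]
  have ht : ((a:ℕ):ℤ) * ((b:ℕ):ℤ) = ((a*b : ℕ) : ℤ) := by push_cast; ring
  rw [ht, zpow_natCast]
  by_cases h : j = m + (a:ZMod d) <;>
    simp [h, smul_eq_mul, pow_right_comm (ω d) m.val b]

lemma Wop_row_sum (a b : ℕ) (j : ZMod d) :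
    ∑ m : ZMod d, Wop d a b j m
      = τ d ^ (a*b) * (ω d ^ b) ^ (j - (a:ZMod d)).val := by
  have h1 : ∀ m : ZMod d, Wop d a b j m
      = if m = j - (a:ZMod d) then τ d ^ (a*b) * (ω d ^ b) ^ m.val else 0 := by
    intro m
    rw [Wop_apply']
    by_cases h : m = j - (a:ZMod d)
    · rw [if_pos (by rw [h]; ring), if_pos h]
    · rw [if_neg, if_neg h]
      intro hc; apply h; rw [hc]; ring
  rw [Finset.sum_congr rfl fun m _ => h1 m, Finset.sum_ite_eq' Finset.univ]
  simp

lemma Wop_row_sum_shift (hd : 2 ≤ d) (a b : ℕ) (k : ZMod d) :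
    ∑ m : ZMod d, Wop d a b (k+1) m = ω d ^ b * ∑ m : ZMod d, Wop d a b k m := by
  rw [Wop_row_sum, Wop_row_sum]
  have h1 : k + 1 - (a:ZMod d) = (k - (a:ZMod d)) + 1 := by ring
  rw [h1, pow_val_succ d hd _ (omega_pow_pow_d d b)]
  ring

lemma Wop_conjT (a b : ℕ) (p q : ZMod d) :
    (Wop d a b)ᴴ p q = if q = p + (a:ZMod d)
      then star (τ d ^ (a*b) * (ω d ^ b) ^ p.val) else 0 := by
  rw [Matrix.conjTranspose_apply, Wop_apply']
  by_cases h : q = p + (a:ZMod d) <;> simp [h]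

lemma Wop_conjT_shift (hd : 2 ≤ d) (a b : ℕ) (p q : ZMod d) :
    (Wop d a b)ᴴ (p + 1) (q + 1) = star (ω d ^ b) * (Wop d a b)ᴴ p q := by
  rw [Wop_conjT, Wop_conjT]
  by_cases h : q = p + (a:ZMod d)
  · rw [if_pos (by rw [h]; ring), if_pos h]
    rw [pow_val_succ d hd _ (omega_pow_pow_d d b) p]
    simp only [star_mul']
    ring
  · rw [if_neg, if_neg h, mul_zero]
    intro hc; apply h
    have h2 : q + 1 = p + (a:ZMod d) + 1 := by rw [hc]; ring
    exact add_right_cancel h2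

lemma Uenc_sum (n : ℕ) (k : ZMod d) (s t : Fin n → ZMod d) :
    ∑ k' : ZMod d, Uenc d n (k, s) (k', t)
      = (1/(d:ℂ)) * ∑ a ∈ Finset.range d, ∑ b ∈ Finset.range d,
          (φcoef d n a b)⁻¹ * (∑ k' : ZMod d, Wop d a b k k') *
            ∏ i, (Wop d a b)ᴴ (s i) (t i) := by
  simp only [Uenc, Matrix.of_apply, ← Finset.mul_sum]
  congr 1
  rw [Finset.sum_comm]
  refine Finset.sum_congr rfl fun a _ => ?_
  rw [Finset.sum_comm]
  refine Finset.sum_congr rfl fun b _ => ?_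
  rw [Finset.mul_sum, Finset.sum_mul]

lemma Uenc_sum_shift (n : ℕ) (hd : 2 ≤ d) (i0 : Fin n)
    (k : ZMod d) (s t : Fin n → ZMod d) :
    ∑ k' : ZMod d, Uenc d n (k + 1, Function.update s i0 (s i0 + 1))
        (k', Function.update t i0 (t i0 + 1))
      = ∑ k' : ZMod d, Uenc d n (k, s) (k', t) := by
  rw [Uenc_sum, Uenc_sum]
  congr 1
  refine Finset.sum_congr rfl fun a _ => Finset.sum_congr rfl fun b _ => ?_
  have hprod : ∏ i, (Wop d a b)ᴴ (Function.update s i0 (s i0 + 1) i)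
        (Function.update t i0 (t i0 + 1) i)
      = star (ω d ^ b) * ∏ i, (Wop d a b)ᴴ (s i) (t i) := by
    rw [← Finset.mul_prod_erase Finset.univ _ (Finset.mem_univ i0),
        ← Finset.mul_prod_erase Finset.univ
          (fun i => (Wop d a b)ᴴ (s i) (t i)) (Finset.mem_univ i0)]
    rw [Function.update_self, Function.update_self, Wop_conjT_shift d hd]
    rw [Finset.prod_congr rfl (fun i hi => by
      rw [Function.update_of_ne (Finset.ne_of_mem_erase hi),
          Function.update_of_ne (Finset.ne_of_mem_erase hi)])]
    ring
  rw [hprod, Wop_row_sum_shift d hd]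
  have hc := omega_pow_mul_star d b
  linear_combination (φcoef d n a b)⁻¹ * (∑ k' : ZMod d, Wop d a b k k') *
    (∏ i, (Wop d a b)ᴴ (s i) (t i)) * hc

lemma Psienc_eq (n : ℕ) (k : ZMod d) (s t : Fin n → ZMod d) :
    Ψenc d n (ψunif d) (k, s, t)
      = (∑ k' : ZMod d, Uenc d n (k, s) (k', t)) *
          (((1 / Real.sqrt d : ℝ) : ℂ) * (((d:ℝ) ^ (-(n:ℝ)/2) : ℝ) : ℂ)) := by
  simp only [Ψenc, Ψinit, ψunif]
  rw [Finset.sum_mul]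
  refine Finset.sum_congr rfl fun k' _ => ?_
  have h1 : ∀ s' : Fin n → ZMod d,
      Uenc d n (k, s) (k', s') * (if s' = t
          then ((1 / Real.sqrt d : ℝ) : ℂ) * (((d:ℝ) ^ (-(n:ℝ)/2) : ℝ) : ℂ) else 0)
        = if s' = t then Uenc d n (k, s) (k', s') *
            (((1 / Real.sqrt d : ℝ) : ℂ) * (((d:ℝ) ^ (-(n:ℝ)/2) : ℝ) : ℂ)) else 0 := by
    intro s'; by_cases h : s' = t <;> simp [h]
  rw [Finset.sum_congr rfl fun s' _ => h1 s', Finset.sum_ite_eq' Finset.univ]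
  simp

lemma Psienc_shift (n : ℕ) (hd : 2 ≤ d) (i0 : Fin n)
    (k : ZMod d) (s t : Fin n → ZMod d) :
    Ψenc d n (ψunif d) (k + 1, Function.update s i0 (s i0 + 1),
        Function.update t i0 (t i0 + 1))
      = Ψenc d n (ψunif d) (k, s, t) := by
  rw [Psienc_eq, Psienc_eq, Uenc_sum_shift d n hd]

end AuxAME

/-- Theorem 2, negative part: for `n ≥ 3` and uniform input, the
encrypted state is not AME(2n+1,d): the reduced density matrix on registers
`(A, S₁, N₁)` is not maximally mixed. -/
theorem encrypted_state_not_AME (d n : ℕ) [NeZero d] (hd : 2 ≤ d) (hn : 3 ≤ n) :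
    (Matrix.of fun x y : ZMod d × ZMod d × ZMod d =>
        ∑ g : {i : Fin n // i ≠ ⟨0, by omega⟩} → ZMod d,
        ∑ h : {i : Fin n // i ≠ ⟨0, by omega⟩} → ZMod d,
          Ψenc d n (ψunif d)
              (x.1, insVal ⟨0, by omega⟩ x.2.1 g, insVal ⟨0, by omega⟩ x.2.2 h) *
            (starRingEnd ℂ) (Ψenc d n (ψunif d)
              (y.1, insVal ⟨0, by omega⟩ y.2.1 g, insVal ⟨0, by omega⟩ y.2.2 h)))
      ≠ (1 / (d : ℂ) ^ 3) •
          (1 : Matrix (ZMod d × ZMod d × ZMod d) (ZMod d × ZMod d × ZMod d) ℂ) := by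
  intro hEq
  haveI : Fact (1 < d) := ⟨by omega⟩
  have hfun : ∀ (g : {i : Fin n // i ≠ ⟨0, by omega⟩} → ZMod d),
      insVal (⟨0, by omega⟩ : Fin n) (1:ZMod d) g
        = Function.update (insVal (⟨0, by omega⟩ : Fin n) (0:ZMod d) g)
            ⟨0, by omega⟩ ((insVal (⟨0, by omega⟩ : Fin n) (0:ZMod d) g) ⟨0, by omega⟩ + 1) := by
    intro g; funext i
    by_cases h : i = (⟨0, by omega⟩ : Fin n) <;>
      simp [insVal, Function.update, h]
  have key : ∀ (g h : {i : Fin n // i ≠ ⟨0, by omega⟩} → ZMod d),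
      Ψenc d n (ψunif d) ((1:ZMod d), insVal ⟨0, by omega⟩ (1:ZMod d) g,
          insVal ⟨0, by omega⟩ (1:ZMod d) h)
        = Ψenc d n (ψunif d) ((0:ZMod d), insVal ⟨0, by omega⟩ (0:ZMod d) g,
          insVal ⟨0, by omega⟩ (0:ZMod d) h) := by
    intro g h
    rw [hfun g, hfun h]
    have hs := Psienc_shift d n hd (⟨0, by omega⟩ : Fin n) 0
      (insVal ⟨0, by omega⟩ (0:ZMod d) g) (insVal ⟨0, by omega⟩ (0:ZMod d) h)
    simpa using hs
  have h10 := congrArg (fun M : Matrix (ZMod d × ZMod d × ZMod d)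
      (ZMod d × ZMod d × ZMod d) ℂ => M (1,1,1) (0,0,0)) hEq
  have h00 := congrArg (fun M : Matrix (ZMod d × ZMod d × ZMod d)
      (ZMod d × ZMod d × ZMod d) ℂ => M (0,0,0) (0,0,0)) hEq
  simp only [Matrix.of_apply, Matrix.smul_apply, Matrix.one_apply, smul_eq_mul] at h10 h00
  have hne : ¬ (((1:ZMod d),(1:ZMod d),(1:ZMod d)) = ((0:ZMod d),(0:ZMod d),(0:ZMod d))) := by
    simp [Prod.ext_iff]
  rw [if_neg hne, mul_zero] at h10
  norm_num at h00
  have hkey : (∑ g : {i : Fin n // i ≠ ⟨0, by omega⟩} → ZMod d,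
      ∑ h : {i : Fin n // i ≠ ⟨0, by omega⟩} → ZMod d,
        Ψenc d n (ψunif d) ((1:ZMod d), insVal ⟨0, by omega⟩ (1:ZMod d) g,
            insVal ⟨0, by omega⟩ (1:ZMod d) h) *
          (starRingEnd ℂ) (Ψenc d n (ψunif d) ((0:ZMod d),
            insVal ⟨0, by omega⟩ (0:ZMod d) g, insVal ⟨0, by omega⟩ (0:ZMod d) h)))
      = ∑ g : {i : Fin n // i ≠ ⟨0, by omega⟩} → ZMod d,
        ∑ h : {i : Fin n // i ≠ ⟨0, by omega⟩} → ZMod d,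
          Ψenc d n (ψunif d) ((0:ZMod d), insVal ⟨0, by omega⟩ (0:ZMod d) g,
              insVal ⟨0, by omega⟩ (0:ZMod d) h) *
            (starRingEnd ℂ) (Ψenc d n (ψunif d) ((0:ZMod d),
              insVal ⟨0, by omega⟩ (0:ZMod d) g, insVal ⟨0, by omega⟩ (0:ZMod d) h)) :=
    Finset.sum_congr rfl fun g _ => Finset.sum_congr rfl fun h _ => by rw [key g h]
  have hzero : ((d:ℂ)^3)⁻¹ = 0 := by rw [← h00, ← hkey, h10]
  have hd0 : (d:ℂ) ≠ 0 := Nat.cast_ne_zero.mpr (NeZero.ne d)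
  simp [hd0] at hzero


end
end
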